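/- arXiv:2506.03418 — 4 statements merged into one kernel-verified Lean document; each statement's English description precedes it below -/
import Mathlib

section
/- If G is a K_{s,t}-free simple graph on n vertices (with s ≤ t), then the number of copies of the star K_{1,s} in G (counted as a center vertex together with an unordered set of s of its neighbors) is at most (t-1)·C(n,s). -/
open SimpleGraph

/-- `G` contains no subgraph isomorphic to `F`. -/
def SimpleGraph.InjFree {γ β : Type*} (F : SimpleGraph γ) (G : SimpleGraph β) : Prop :=
  ¬ ∃ f : F →g G, Function.Injective f

/-- A copy of the star `K_{1,s}`: a center vertex together with an unordered set of
`s` of its neighbors. -/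
def starCopies {n : ℕ} (G : SimpleGraph (Fin n)) (s : ℕ) : Set (Fin n × Finset (Fin n)) :=
  {p | p.2.card = s ∧ ∀ v ∈ p.2, G.Adj p.1 v}

attribute [local instance] Classical.propDecidable

/-- In a `K_{s,t}`-free graph, every `s`-element vertex set has at most `t-1`
common neighbors. -/
lemma common_le (n s t : ℕ) (G : SimpleGraph (Fin n))
    (hG : (completeBipartiteGraph (Fin s) (Fin t)).InjFree G)
    (S : Finset (Fin n)) (hS : S.card = s) :
    (Finset.univ.filter (fun v => ∀ u ∈ S, G.Adj v u)).card ≤ t - 1 := by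
  by_contra h
  push_neg at h
  have ht : t ≤ (Finset.univ.filter (fun v => ∀ u ∈ S, G.Adj v u)).card := by omega
  obtain ⟨T, hTsub, hT⟩ := Finset.exists_subset_card_eq ht
  have hTadj : ∀ v ∈ T, ∀ u ∈ S, G.Adj v u := by
    intro v hv
    have := hTsub hv
    simp only [Finset.mem_filter] at this
    exact this.2
  have hdisj : ∀ v ∈ T, v ∉ S := by
    intro v hv hvS
    exact (G.loopless.irrefl v) (hTadj v hv v hvS)
  let eS : Fin s ≃ S := (S.equivFinOfCardEq hS).symm
  let eT : Fin t ≃ T := (T.equivFinOfCardEq hT).symm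
  apply hG
  set f : (Fin s) ⊕ (Fin t) → Fin n := Sum.elim (fun i => (eS i : Fin n)) (fun j => (eT j : Fin n)) with hf
  have hinj : Function.Injective f := by
    rintro (a|a) (b|b) hab <;> simp only [hf, Sum.elim_inl, Sum.elim_inr] at hab
    · congr 1; exact eS.injective (Subtype.ext hab)
    · exact absurd ((hab ▸ (eS a).2 : ((eT b : Fin n)) ∈ S)) (hdisj _ (eT b).2)
    · exact absurd ((hab.symm ▸ (eS b).2 : ((eT a : Fin n)) ∈ S)) (hdisj _ (eT a).2)
    · congr 1; exact eT.injective (Subtype.ext hab)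
  refine ⟨⟨f, ?_⟩, hinj⟩
  rintro (a|a) (b|b) hab <;> simp only [hf, Sum.elim_inl, Sum.elim_inr] <;> simp at hab
  · exact ((hTadj _ (eT b).2 _ (eS a).2)).symm
  · exact hTadj _ (eT a).2 _ (eS b).2

/-- If `G` is a `K_{s,t}`-free graph on `n` vertices with `s ≤ t`, then the number of copies
of the star `K_{1,s}` in `G` is at most `(t-1)·C(n,s)`. -/
theorem stmt_2 (n s t : ℕ) (hst : s ≤ t) (G : SimpleGraph (Fin n))
    (hG : (completeBipartiteGraph (Fin s) (Fin t)).InjFree G) :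
    (starCopies G s).ncard ≤ (t - 1) * n.choose s := by
  classical
  set A : Finset (Fin n × Finset (Fin n)) :=
    Finset.univ.filter (fun p => p.2.card = s ∧ ∀ v ∈ p.2, G.Adj p.1 v) with hA
  have hset : starCopies G s = ↑A := by
    ext p; simp [starCopies, hA]
  rw [hset, Set.ncard_coe_finset]
  have hfib := Finset.card_eq_sum_card_fiberwise
    (f := fun p : Fin n × Finset (Fin n) => p.2) (s := A)
    (t := Finset.powersetCard s Finset.univ)
    (by intro p hp
        simp only [hA, Finset.mem_coe, Finset.mem_filter] at hp
        simp [Finset.mem_powersetCard, hp.2.1])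
  rw [hfib]
  have hbound : ∀ S ∈ Finset.powersetCard s (Finset.univ : Finset (Fin n)),
      (A.filter (fun p => p.2 = S)).card ≤ t - 1 := by
    intro S hS
    rw [Finset.mem_powersetCard] at hS
    refine le_trans ?_ (common_le n s t G hG S hS.2)
    apply Finset.card_le_card_of_injOn (fun p => p.1)
    · intro p hp
      simp only [hA, Finset.mem_coe, Finset.mem_filter] at hp ⊢
      refine ⟨Finset.mem_univ _, fun u hu => ?_⟩
      exact hp.1.2.2 u (hp.2 ▸ hu)
    · intro p hp q hq hpq
      simp only [Finset.mem_coe, Finset.mem_filter] at hp hq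
      exact Prod.ext hpq (hp.2.trans hq.2.symm)
  calc ∑ S ∈ Finset.powersetCard s (Finset.univ : Finset (Fin n)),
        (A.filter (fun p => p.2 = S)).card
      ≤ ∑ _S ∈ Finset.powersetCard s (Finset.univ : Finset (Fin n)), (t - 1) :=
        Finset.sum_le_sum hbound
    _ = (t - 1) * n.choose s := by
        simp [Finset.sum_const, Finset.card_powersetCard, mul_comm]
end

section
/- For any graphs H and F with at least one edge each, ex(n, H, F) ≥ ex(n, F) − ex(n, H), where ex(n, F) = ex(n, K2, F) is the ordinary Turán number. -/
open SimpleGraph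

/-- `G` contains no subgraph isomorphic to `F`. -/
def SimpleGraph.Free' {γ β : Type*} (F : SimpleGraph γ) (G : SimpleGraph β) : Prop :=
  ¬ ∃ f : F →g G, Function.Injective f

/-- The number of copies of `H` in `G`: the number of subgraphs of `G` isomorphic to `H`. -/
noncomputable def copyCount {α β : Type*} (H : SimpleGraph α) (G : SimpleGraph β) : ℕ :=
  {G' : G.Subgraph | Nonempty (H ≃g G'.coe)}.ncard

/-- The generalized Turán number `ex(n, H, F)`. -/
noncomputable def genex {α γ : Type*} (n : ℕ) (H : SimpleGraph α) (F : SimpleGraph γ) : ℕ :=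
  sSup {m | ∃ G : SimpleGraph (Fin n), F.Free' G ∧ copyCount H G = m}

/-- The ordinary Turán number `ex(n, F)`. -/
noncomputable def exNum {γ : Type*} (n : ℕ) (F : SimpleGraph γ) : ℕ :=
  sSup {m | ∃ G : SimpleGraph (Fin n), F.Free' G ∧ G.edgeSet.ncard = m}

lemma finite_subgraph {n : ℕ} (G : SimpleGraph (Fin n)) : Finite G.Subgraph := by
  have : Function.Injective (fun G' : G.Subgraph => (G'.verts, G'.Adj)) := by
    intro a b h
    simp only [Prod.mk.injEq] at h
    exact SimpleGraph.Subgraph.ext h.1 h.2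
  exact Finite.of_injective _ this

noncomputable def homIso {α β : Type*} {H : SimpleGraph α} {G : SimpleGraph β}
    (f : H →g G) (hf : Function.Injective f) : H ≃g (SimpleGraph.Subgraph.map f ⊤).coe where
  toEquiv := (Equiv.ofInjective f hf).trans (Equiv.setCongr (by simp [Subgraph.map]))
  map_rel_iff' := by
    intro a b
    simp only [Equiv.trans_apply, Equiv.setCongr_apply, Subgraph.coe_adj, Subgraph.map_adj]
    constructor
    · rintro ⟨u, v, h, hu, hv⟩
      simp only [Equiv.ofInjective_apply] at hu hv
      obtain rfl := hf hu; obtain rfl := hf hv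
      simpa using h
    · intro h
      exact ⟨a, b, by simpa using h, rfl, rfl⟩

lemma copy_edge_nonempty {α β : Type*} {H : SimpleGraph α} {G : SimpleGraph β}
    (hH : H.edgeSet.Nonempty) {G' : G.Subgraph} (h : Nonempty (H ≃g G'.coe)) :
    G'.edgeSet.Nonempty := by
  obtain ⟨e⟩ := h
  obtain ⟨x, hx⟩ := hH
  induction x using Sym2.ind with
  | _ u v =>
    rw [SimpleGraph.mem_edgeSet] at hx
    have := e.map_rel_iff.2 hx
    exact ⟨s(e u, e v), this⟩

lemma bddAbove_exSet {γ : Type*} (n : ℕ) (F : SimpleGraph γ) :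
    BddAbove {m | ∃ G : SimpleGraph (Fin n), F.Free' G ∧ G.edgeSet.ncard = m} := by
  refine ⟨Nat.card (Sym2 (Fin n)), ?_⟩
  rintro m ⟨G, -, rfl⟩
  calc G.edgeSet.ncard ≤ (Set.univ : Set (Sym2 (Fin n))).ncard :=
        Set.ncard_le_ncard (Set.subset_univ _) (Set.toFinite _)
    _ = Nat.card (Sym2 (Fin n)) := Set.ncard_univ _

lemma bddAbove_genexSet {α γ : Type*} (n : ℕ) (H : SimpleGraph α) (F : SimpleGraph γ) :
    BddAbove {m | ∃ G : SimpleGraph (Fin n), F.Free' G ∧ copyCount H G = m} := by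
  refine ⟨Nat.card (Set (Fin n) × (Fin n → Fin n → Prop)), ?_⟩
  rintro m ⟨G, -, rfl⟩
  have hfin := finite_subgraph G
  have hinj : Function.Injective (fun G' : G.Subgraph => (G'.verts, G'.Adj)) := by
    intro a b h
    simp only [Prod.mk.injEq] at h
    exact SimpleGraph.Subgraph.ext h.1 h.2
  calc copyCount H G ≤ (Set.univ : Set G.Subgraph).ncard :=
        Set.ncard_le_ncard (Set.subset_univ _) (Set.toFinite _)
    _ = Nat.card G.Subgraph := Set.ncard_univ _
    _ ≤ Nat.card (Set (Fin n) × (Fin n → Fin n → Prop)) :=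
        Nat.card_le_card_of_injective _ hinj

/-- For any graphs `H` and `F` with at least one edge each,
`ex(n, H, F) ≥ ex(n, F) − ex(n, H)`. -/
theorem stmt_5 {α γ : Type*} [Fintype α] [Fintype γ] (n : ℕ)
    (H : SimpleGraph α) (F : SimpleGraph γ)
    (hH : H.edgeSet.Nonempty) (hF : F.edgeSet.Nonempty) :
    exNum n F - exNum n H ≤ genex n H F := by
  classical
  -- the edge-count set for F is nonempty (⊥ is F-free)
  have hbotfree : F.Free' (⊥ : SimpleGraph (Fin n)) := by
    rintro ⟨f, -⟩
    obtain ⟨x, hx⟩ := hF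
    induction x using Sym2.ind with
    | _ u v =>
      rw [SimpleGraph.mem_edgeSet] at hx
      exact f.map_adj hx
  have hne : {m | ∃ G : SimpleGraph (Fin n), F.Free' G ∧ G.edgeSet.ncard = m}.Nonempty :=
    ⟨(⊥ : SimpleGraph (Fin n)).edgeSet.ncard, ⊥, hbotfree, rfl⟩
  obtain ⟨G₀, hG₀free, hG₀card⟩ :
      exNum n F ∈ {m | ∃ G : SimpleGraph (Fin n), F.Free' G ∧ G.edgeSet.ncard = m} :=
    Nat.sSup_mem hne (bddAbove_exSet n F)
  have hfinSub := finite_subgraph G₀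
  set S : Set G₀.Subgraph := {G' : G₀.Subgraph | Nonempty (H ≃g G'.coe)} with hS
  -- pick an edge from each copy
  have hpick : ∀ G' : S, ∃ e, e ∈ (G' : G₀.Subgraph).edgeSet :=
    fun G' => copy_edge_nonempty hH G'.2
  choose pick hpickmem using hpick
  set D : Set (Sym2 (Fin n)) := Set.range pick with hD
  have hDcard : D.ncard ≤ _root_.copyCount H G₀ := by
    rw [hD, ← Set.image_univ]
    calc (pick '' Set.univ).ncard ≤ (Set.univ : Set S).ncard :=
          Set.ncard_image_le (Set.toFinite _)
      _ = Nat.card S := Set.ncard_univ _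
      _ = S.ncard := Nat.card_coe_set_eq _
  set G'' : SimpleGraph (Fin n) := G₀.deleteEdges D with hG''
  -- G'' is H-free
  have hHfree : H.Free' G'' := by
    rintro ⟨f, hf⟩
    set g : H →g G₀ := (SimpleGraph.Hom.ofLE (G₀.deleteEdges_le D)).comp f with hg
    have hginj : Function.Injective g := by
      intro a b hab
      exact hf hab
    set G₁ : G₀.Subgraph := SimpleGraph.Subgraph.map g ⊤ with hG₁
    have hmem : G₁ ∈ S := ⟨homIso g hginj⟩
    have hsub : G₁.edgeSet ⊆ G''.edgeSet := by
      intro x hx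
      induction x using Sym2.ind with
      | _ a b =>
        rw [SimpleGraph.Subgraph.mem_edgeSet] at hx
        obtain ⟨u, v, huv, hu, hv⟩ := hx
        rw [SimpleGraph.mem_edgeSet]
        have : H.Adj u v := by simpa using huv
        have := f.map_adj this
        rw [← hu, ← hv]
        simpa [hg] using this
    have he : pick ⟨G₁, hmem⟩ ∈ G''.edgeSet := hsub (hpickmem ⟨G₁, hmem⟩)
    have heD : pick ⟨G₁, hmem⟩ ∈ D := Set.mem_range_self _
    rw [hG'', SimpleGraph.edgeSet_deleteEdges] at he
    exact he.2 heD
  -- edge counting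
  have hG''le : G''.edgeSet.ncard ≤ exNum n H :=
    le_csSup (bddAbove_exSet n H) ⟨G'', hHfree, rfl⟩
  have hsub0 : G₀.edgeSet ⊆ G''.edgeSet ∪ D := by
    intro x hx
    rw [hG'', SimpleGraph.edgeSet_deleteEdges]
    by_cases h : x ∈ D
    · exact Or.inr h
    · exact Or.inl ⟨hx, h⟩
  have hcount : exNum n F ≤ exNum n H + _root_.copyCount H G₀ := by
    calc exNum n F = G₀.edgeSet.ncard := hG₀card.symm
      _ ≤ (G''.edgeSet ∪ D).ncard := Set.ncard_le_ncard hsub0 (Set.toFinite _)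
      _ ≤ G''.edgeSet.ncard + D.ncard := Set.ncard_union_le _ _
      _ ≤ exNum n H + _root_.copyCount H G₀ := Nat.add_le_add hG''le hDcard
  have hgen : _root_.copyCount H G₀ ≤ genex n H F :=
    le_csSup (bddAbove_genexSet n H F) ⟨G₀, hG₀free, rfl⟩
  omega
end

section
/- For r < k, the number of copies of K_r in any complete multipartite graph on n vertices with at most k-1 parts is at most the number of copies of K_r in the Turán graph T(n, k-1); equivalently, among complete multipartite graphs with at most k-1 parts and n vertices total, balancing the part sizes maximizes the elementary symmetric polynomial e_r of the part sizes. -/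
open SimpleGraph Finset

/-- The number of copies of `K_r` in `G`: the number of `r`-cliques. -/
noncomputable def cliqueCount {β : Type*} (G : SimpleGraph β) (r : ℕ) : ℕ :=
  {s : Finset β | G.IsNClique r s}.ncard

/-- Elementary symmetric sum over subsets of `s`. -/
private def EE {m : ℕ} (s : Finset (Fin m)) (c : Fin m → ℕ) (r : ℕ) : ℕ :=
  ∑ T ∈ s.powersetCard r, ∏ x ∈ T, c x

private lemma EE_zero {m : ℕ} (s : Finset (Fin m)) (c : Fin m → ℕ) : EE s c 0 = 1 := by
  simp [EE]

private lemma EE_insert {m : ℕ} {a : Fin m} {s : Finset (Fin m)} (h : a ∉ s)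
    (c : Fin m → ℕ) (r : ℕ) :
    EE (insert a s) c (r + 1) = EE s c (r + 1) + c a * EE s c r := by
  have hsub : ∀ T ∈ s.powersetCard r, a ∉ T := fun T hT ha =>
    h ((Finset.mem_powersetCard.1 hT).1 ha)
  have hsub' : ∀ T ∈ s.powersetCard (r + 1), a ∉ T := fun T hT ha =>
    h ((Finset.mem_powersetCard.1 hT).1 ha)
  rw [EE, Finset.powersetCard_succ_insert h, Finset.sum_union, Finset.sum_image]
  · rw [EE, EE, Finset.mul_sum]
    congr 1
    refine Finset.sum_congr rfl fun T hT => ?_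
    rw [Finset.prod_insert (hsub T hT)]
  · intro T hT U hU hTU
    rw [← Finset.erase_insert (hsub T hT), ← Finset.erase_insert (hsub U hU), hTU]
  · rw [Finset.disjoint_left]
    intro T hT hT'
    obtain ⟨U, _, rfl⟩ := Finset.mem_image.1 hT'
    exact hsub' _ hT (Finset.mem_insert_self a U)

private lemma EE_congr {m : ℕ} {s : Finset (Fin m)} {c d : Fin m → ℕ}
    (h : ∀ x ∈ s, c x = d x) (r : ℕ) : EE s c r = EE s d r := by
  refine Finset.sum_congr rfl fun T hT => Finset.prod_congr rfl fun x hx => ?_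
  exact h x ((Finset.mem_powersetCard.1 hT).1 hx)

private lemma EE_smooth {m : ℕ} (c : Fin m → ℕ) (r : ℕ) {i j : Fin m} (hij : i ≠ j)
    (a b : ℕ) (hs : a + b = c i + c j) (hp : c i * c j ≤ a * b) :
    EE Finset.univ c r ≤
      EE Finset.univ (Function.update (Function.update c i a) j b) r := by
  classical
  set c' := Function.update (Function.update c i a) j b with hc'
  set s : Finset (Fin m) := (Finset.univ.erase i).erase j with hsdef
  have hjs : j ∉ s := Finset.notMem_erase _ _
  have hins : insert j s = Finset.univ.erase i :=
    Finset.insert_erase (Finset.mem_erase.2 ⟨hij.symm, Finset.mem_univ j⟩)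
  have his : i ∉ insert j s := by rw [hins]; exact Finset.notMem_erase _ _
  have huniv : insert i (insert j s) = Finset.univ := by
    rw [hins, Finset.insert_erase (Finset.mem_univ i)]
  have hmemi : ∀ x ∈ s, x ≠ i := fun x hx =>
    Finset.ne_of_mem_erase (Finset.mem_of_mem_erase hx)
  have hmemj : ∀ x ∈ s, x ≠ j := fun x hx => Finset.ne_of_mem_erase hx
  have hcong : ∀ r', EE s c' r' = EE s c r' := by
    intro r'
    refine EE_congr (fun x hx => ?_) r'
    rw [hc', Function.update_of_ne (hmemj x hx), Function.update_of_ne (hmemi x hx)]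
  have hc'i : c' i = a := by
    rw [hc', Function.update_of_ne hij, Function.update_self]
  have hc'j : c' j = b := by rw [hc', Function.update_self]
  rcases r with _ | r
  · rw [EE_zero, EE_zero]
  rcases r with _ | r
  · -- degree 1
    have e1 : EE Finset.univ c 1 = EE s c 1 + c j + c i := by
      rw [← huniv, EE_insert his, EE_insert hjs]
      simp [EE_zero]
    have e2 : EE Finset.univ c' 1 = EE s c 1 + c' j + c' i := by
      rw [← huniv, EE_insert his, EE_insert hjs]
      simp [EE_zero, hcong]
    rw [e1, e2, hc'i, hc'j]
    omega
  · -- degree ≥ 2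
    have e1 : ∀ e : Fin m → ℕ, EE Finset.univ e (r + 2) =
        EE s e (r + 2) + e j * EE s e (r + 1) +
          e i * (EE s e (r + 1) + e j * EE s e r) := by
      intro e
      rw [← huniv, EE_insert his, EE_insert hjs, EE_insert hjs]
    rw [e1 c, e1 c', hcong, hcong, hcong, hc'i, hc'j]
    have h1 : c i * EE s c (r + 1) + c j * EE s c (r + 1)
        = a * EE s c (r + 1) + b * EE s c (r + 1) := by
      rw [← add_mul, ← add_mul, hs]
    have h2 : c i * (c j * EE s c r) ≤ a * (b * EE s c r) := by
      rw [← mul_assoc, ← mul_assoc]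
      exact Nat.mul_le_mul_right _ hp
    rw [mul_add, mul_add]
    linarith [h1, h2]

private lemma sum_pair {m : ℕ} {i j : Fin m} (hij : i ≠ j) (h : Fin m → ℕ) :
    ∑ x, h x = h i + h j + ∑ x ∈ (Finset.univ.erase i).erase j, h x := by
  rw [← Finset.add_sum_erase _ h (Finset.mem_univ i),
    ← Finset.add_sum_erase _ h (Finset.mem_erase.2 ⟨hij.symm, Finset.mem_univ j⟩)]
  ring

private lemma count_aux (q : ℕ) (M : Multiset ℕ) (h : ∀ x ∈ M, x = q ∨ x = q + 1) :
    M.sum = q * Multiset.card M + M.count (q + 1) ∧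
      Multiset.card M = M.count q + M.count (q + 1) := by
  induction M using Multiset.induction with
  | empty => simp
  | cons a M ih =>
    obtain ⟨e1, e2⟩ := ih (fun x hx => h x (Multiset.mem_cons_of_mem hx))
    obtain h1 | h1 := h a (Multiset.mem_cons_self a M) <;> subst h1
    · refine ⟨?_, ?_⟩
      · rw [Multiset.sum_cons, Multiset.card_cons, mul_add, mul_one, e1,
          Multiset.count_cons_of_ne (by omega)]
        ring
      · rw [Multiset.card_cons, Multiset.count_cons_self,
          Multiset.count_cons_of_ne (by omega), e2]
        ring
    · refine ⟨?_, ?_⟩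
      · rw [Multiset.sum_cons, Multiset.card_cons, mul_add, mul_one, e1,
          Multiset.count_cons_self]
        ring
      · rw [Multiset.card_cons, Multiset.count_cons_of_ne (by omega),
          Multiset.count_cons_self, e2]
        ring

private lemma balanced_map_eq {m : ℕ} (c d : Fin m → ℕ)
    (hc : ∀ i j, c i ≤ c j + 1) (hd : ∀ i j, d i ≤ d j + 1)
    (hsum : ∑ i, c i = ∑ i, d i) :
    Multiset.map c (Finset.univ : Finset (Fin m)).val =
      Multiset.map d (Finset.univ : Finset (Fin m)).val := by
  rcases Nat.eq_zero_or_pos m with hm | hm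
  · subst hm; simp [Finset.univ_eq_empty]
  obtain ⟨m', rfl⟩ : ∃ m', m = m' + 1 := ⟨m - 1, by omega⟩
  set n := ∑ i, c i with hn
  -- min values
  obtain ⟨i₀, -, hi₀⟩ := Finset.exists_min_image Finset.univ c ⟨default, Finset.mem_univ _⟩
  obtain ⟨j₀, -, hj₀⟩ := Finset.exists_min_image Finset.univ d ⟨default, Finset.mem_univ _⟩
  set q := c i₀ with hq
  set q' := d j₀ with hq'
  have hcb : ∀ i, c i = q ∨ c i = q + 1 := fun i => by
    have := hi₀ i (Finset.mem_univ i); have := hc i i₀; omega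
  have hdb : ∀ i, d i = q' ∨ d i = q' + 1 := fun i => by
    have := hj₀ i (Finset.mem_univ i); have := hd i j₀; omega
  have bounds : ∀ (e : Fin (m' + 1) → ℕ) (p : ℕ), (∀ i, e i = p ∨ e i = p + 1) →
      (∃ i, e i = p) → (m' + 1) * p ≤ ∑ i, e i ∧ ∑ i, e i < (m' + 1) * (p + 1) := by
    intro e p he ⟨i₁, hi₁⟩
    constructor
    · calc (m' + 1) * p = ∑ _i : Fin (m' + 1), p := by
            simp [Finset.sum_const, Finset.card_univ, mul_comm]
        _ ≤ ∑ i, e i := Finset.sum_le_sum fun i _ => by rcases he i with h | h <;> omega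
    · have : ∑ i, e i = e i₁ + ∑ i ∈ Finset.univ.erase i₁, e i :=
        (Finset.add_sum_erase _ e (Finset.mem_univ i₁)).symm
      have hle : ∑ i ∈ Finset.univ.erase i₁, e i ≤ m' * (p + 1) := by
        calc ∑ i ∈ Finset.univ.erase i₁, e i
            ≤ ∑ _i ∈ Finset.univ.erase i₁, (p + 1) :=
              Finset.sum_le_sum fun i _ => by rcases he i with h | h <;> omega
          _ = m' * (p + 1) := by
              rw [Finset.sum_const, Finset.card_erase_of_mem (Finset.mem_univ i₁)]
              simp [Finset.card_univ, mul_comm]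
      have e1 : (m' + 1) * (p + 1) = m' * (p + 1) + (p + 1) := by ring
      omega
  have hb1 : (m' + 1) * q ≤ n ∧ n < (m' + 1) * (q + 1) := bounds c q hcb ⟨i₀, rfl⟩
  have hb2' := bounds d q' hdb ⟨j₀, rfl⟩
  rw [← hsum] at hb2'
  have hb2 : (m' + 1) * q' ≤ n ∧ n < (m' + 1) * (q' + 1) := hb2'
  have hqq : q = q' := by
    rcases lt_trichotomy q q' with hlt | heq | hlt
    · exfalso
      have : (m' + 1) * (q + 1) ≤ (m' + 1) * q' := Nat.mul_le_mul_left _ (by omega)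
      omega
    · exact heq
    · exfalso
      have : (m' + 1) * (q' + 1) ≤ (m' + 1) * q := Nat.mul_le_mul_left _ (by omega)
      omega
  rw [← hqq] at hdb
  set Mc := Multiset.map c (Finset.univ : Finset (Fin (m' + 1))).val with hMc
  set Md := Multiset.map d (Finset.univ : Finset (Fin (m' + 1))).val with hMd
  have hmemc : ∀ x ∈ Mc, x = q ∨ x = q + 1 := by
    intro x hx
    obtain ⟨i, -, rfl⟩ := Multiset.mem_map.1 hx
    exact hcb i
  have hmemd : ∀ x ∈ Md, x = q ∨ x = q + 1 := by
    intro x hx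
    obtain ⟨i, -, rfl⟩ := Multiset.mem_map.1 hx
    exact hdb i
  have hsumc : Mc.sum = n := by rw [hMc, hn]; rfl
  have hsumd : Md.sum = n := by rw [hMd, hsum]; rfl
  have hcardc : Multiset.card Mc = m' + 1 := by
    rw [hMc, Multiset.card_map]
    exact Finset.card_univ.trans (Fintype.card_fin _)
  have hcardd : Multiset.card Md = m' + 1 := by
    rw [hMd, Multiset.card_map]
    exact Finset.card_univ.trans (Fintype.card_fin _)
  obtain ⟨ac1, ac2⟩ := count_aux q Mc hmemc
  obtain ⟨ad1, ad2⟩ := count_aux q Md hmemd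
  rw [hcardc, hsumc] at ac1
  rw [hcardc] at ac2
  rw [hcardd, hsumd] at ad1
  rw [hcardd] at ad2
  refine Multiset.ext.2 fun x => ?_
  rcases eq_or_ne x q with rfl | hxq
  · omega
  rcases eq_or_ne x (q + 1) with rfl | hxq1
  · omega
  · rw [Multiset.count_eq_zero_of_notMem, Multiset.count_eq_zero_of_notMem]
    · intro hx; rcases hmemd x hx with h | h <;> omega
    · intro hx; rcases hmemc x hx with h | h <;> omega

private lemma EE_le_balanced {m : ℕ} (r : ℕ) (d : Fin m → ℕ)
    (hd : ∀ i j, d i ≤ d j + 1) :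
    ∀ N, ∀ c : Fin m → ℕ, (∑ i, c i * c i) ≤ N → (∑ i, c i) = (∑ i, d i) →
      EE Finset.univ c r ≤ EE Finset.univ d r := by
  intro N
  induction N using Nat.strong_induction_on with
  | _ N ih =>
    intro c hN hsum
    by_cases hbal : ∀ i j : Fin m, c i ≤ c j + 1
    · have hmap := balanced_map_eq c d hbal hd hsum
      have e1 : EE Finset.univ c r = (Multiset.map c Finset.univ.val).esymm r :=
        (Finset.esymm_map_val c Finset.univ r).symm
      have e2 : EE Finset.univ d r = (Multiset.map d Finset.univ.val).esymm r :=
        (Finset.esymm_map_val d Finset.univ r).symm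
      rw [e1, e2, hmap]
    · push_neg at hbal
      obtain ⟨i, j, hij2⟩ := hbal
      have hij : i ≠ j := by rintro rfl; omega
      obtain ⟨t, ht⟩ : ∃ t, c i = c j + 2 + t := ⟨c i - c j - 2, by omega⟩
      set a := c i - 1 with hadef
      set b := c j + 1 with hbdef
      have ha : a = c j + 1 + t := by omega
      set c' := Function.update (Function.update c i a) j b with hc'
      have hstep : EE Finset.univ c r ≤ EE Finset.univ c' r := by
        refine EE_smooth c r hij a b (by omega) ?_
        rw [ht, ha, hbdef]; nlinarith
      have hc'i : c' i = a := by
        rw [hc', Function.update_of_ne hij, Function.update_self]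
      have hc'j : c' j = b := by rw [hc', Function.update_self]
      have hc'x : ∀ x ∈ (Finset.univ.erase i).erase j, c' x = c x := by
        intro x hx
        have hxi : x ≠ i := Finset.ne_of_mem_erase (Finset.mem_of_mem_erase hx)
        have hxj : x ≠ j := Finset.ne_of_mem_erase hx
        rw [hc', Function.update_of_ne hxj, Function.update_of_ne hxi]
      have hc's : ∑ x ∈ (Finset.univ.erase i).erase j, c' x
          = ∑ x ∈ (Finset.univ.erase i).erase j, c x :=
        Finset.sum_congr rfl fun x hx => hc'x x hx
      have hc'sq : ∑ x ∈ (Finset.univ.erase i).erase j, c' x * c' x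
          = ∑ x ∈ (Finset.univ.erase i).erase j, c x * c x :=
        Finset.sum_congr rfl fun x hx => by rw [hc'x x hx]
      have hsum' : ∑ x, c' x = ∑ x, c x := by
        rw [sum_pair hij c', sum_pair hij c, hc'i, hc'j, hc's]
        omega
      have hmeas : ∑ x, c' x * c' x < ∑ x, c x * c x := by
        rw [sum_pair hij (fun x => c' x * c' x), sum_pair hij (fun x => c x * c x),
          hc'sq, hc'i, hc'j]
        have : a * a + b * b < c i * c i + c j * c j := by
          rw [ht, ha, hbdef]; nlinarith
        omega
      exact hstep.trans (ih _ (lt_of_lt_of_le hmeas hN) c' le_rfl (hsum'.trans hsum))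

private lemma cliqueCount_comap_eq {n m : ℕ} (f : Fin n → Fin m) (r : ℕ) :
    cliqueCount ((⊤ : SimpleGraph (Fin m)).comap f) r
      = ∑ T ∈ (Finset.univ : Finset (Fin m)).powersetCard r,
          ∏ i ∈ T, (Finset.univ.filter fun v => f v = i).card := by
  classical
  set G := (⊤ : SimpleGraph (Fin m)).comap f with hG
  have hadj : ∀ x y : Fin n, G.Adj x y ↔ f x ≠ f y := by
    intro x y; rw [hG]; simp
  have h1 : {s : Finset (Fin n) | G.IsNClique r s}
      = ↑(Finset.univ.filter fun s => G.IsNClique r s) := by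
    ext s; simp
  rw [cliqueCount, h1, Set.ncard_coe_finset]
  have h2 : ∑ T ∈ (Finset.univ : Finset (Fin m)).powersetCard r,
        ∏ i ∈ T, (Finset.univ.filter fun v => f v = i).card
      = ((Finset.univ.powersetCard r).sigma
          (fun T => T.pi (fun i => Finset.univ.filter fun v => f v = i))).card := by
    rw [Finset.card_sigma]
    exact Finset.sum_congr rfl fun T _ => (Finset.card_pi _ _).symm
  rw [h2]
  refine (Finset.card_bij (fun p _ => p.1.attach.image fun i => p.2 i.1 i.2) ?_ ?_ ?_).symm
  · -- maps into cliques
    rintro ⟨T, p⟩ hp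
    obtain ⟨hT, hpi⟩ := Finset.mem_sigma.1 hp
    have hval : ∀ (i : Fin m) (hi : i ∈ T), f (p i hi) = i := by
      intro i hi
      have := Finset.mem_pi.1 hpi i hi
      exact (Finset.mem_filter.1 this).2
    refine Finset.mem_filter.2 ⟨Finset.mem_univ _, ?_, ?_⟩
    · -- clique
      intro x hx y hy hxy
      simp only [Finset.coe_image, Set.mem_image, Finset.mem_coe] at hx hy
      obtain ⟨⟨i, hi⟩, -, rfl⟩ := hx
      obtain ⟨⟨j, hj⟩, -, rfl⟩ := hy
      rw [hadj, hval i hi, hval j hj]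
      intro hijeq; exact hxy (by subst hijeq; rfl)
    · -- card
      have hinj : Set.InjOn (fun i : {x // x ∈ T} => p i.1 i.2) T.attach := by
        intro x _ y _ hxy
        have : f (p x.1 x.2) = f (p y.1 y.2) := by
          simp only at hxy; rw [hxy]
        rw [hval x.1 x.2, hval y.1 y.2] at this
        exact Subtype.ext this
      rw [Finset.card_image_of_injOn hinj, Finset.card_attach]
      exact (Finset.mem_powersetCard.1 hT).2
  · -- injective
    rintro ⟨T, p⟩ hp ⟨U, q⟩ hq heq
    have heq' : (T.attach.image fun i => p i.1 i.2)
        = (U.attach.image fun i => q i.1 i.2) := heq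
    clear heq
    obtain ⟨hT, hpi⟩ := Finset.mem_sigma.1 hp
    obtain ⟨hU, hqi⟩ := Finset.mem_sigma.1 hq
    have hvalp : ∀ (i : Fin m) (hi : i ∈ T), f (p i hi) = i := fun i hi =>
      (Finset.mem_filter.1 (Finset.mem_pi.1 hpi i hi)).2
    have hvalq : ∀ (i : Fin m) (hi : i ∈ U), f (q i hi) = i := fun i hi =>
      (Finset.mem_filter.1 (Finset.mem_pi.1 hqi i hi)).2
    have himg : ∀ (V : Finset (Fin m)) (w : ∀ i ∈ V, Fin n),
        (∀ (i : Fin m) (hi : i ∈ V), f (w i hi) = i) →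
        (V.attach.image fun i => w i.1 i.2).image f = V := by
      intro V w hw
      ext i
      simp only [Finset.mem_image]
      constructor
      · rintro ⟨x, ⟨⟨j, hj⟩, -, rfl⟩, rfl⟩
        rw [hw j hj]; exact hj
      · intro hi
        exact ⟨w i hi, ⟨⟨i, hi⟩, Finset.mem_attach _ _, rfl⟩, hw i hi⟩
    have hTU : T = U := by
      rw [← himg T p hvalp, ← himg U q hvalq, heq']
    subst hTU
    have hpq : ∀ (i : Fin m) (hi : i ∈ T), p i hi = q i hi := by
      intro i hi
      have hmem : p i hi ∈ T.attach.image fun x => q x.1 x.2 := by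
        rw [← heq']
        exact Finset.mem_image.2 ⟨⟨i, hi⟩, Finset.mem_attach _ _, rfl⟩
      obtain ⟨⟨j, hj⟩, -, hji⟩ := Finset.mem_image.1 hmem
      have : f (q j hj) = f (p i hi) := by rw [hji]
      rw [hvalq j hj, hvalp i hi] at this
      subst this
      exact hji.symm
    congr 1
    · funext i hi
      exact hpq i hi
  · -- surjective
    intro s hs
    obtain ⟨-, hclique, hcard⟩ := Finset.mem_filter.1 hs
    have hinj : Set.InjOn f s := by
      intro x hx y hy hfxy
      by_contra hne
      exact (hadj x y).1 (hclique hx hy hne) hfxy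
    set T := s.image f with hT
    have hTcard : T.card = r := by
      rw [hT, Finset.card_image_of_injOn hinj, hcard]
    have hne : ∀ (i : Fin m), i ∈ T → (s.filter fun v => f v = i).Nonempty := by
      intro i hi
      obtain ⟨x, hx, rfl⟩ := Finset.mem_image.1 hi
      exact ⟨x, Finset.mem_filter.2 ⟨hx, rfl⟩⟩
    classical
    refine ⟨⟨T, fun i hi => (s.filter fun v => f v = i).min' (hne i hi)⟩, ?_, ?_⟩
    · refine Finset.mem_sigma.2 ⟨Finset.mem_powersetCard.2 ⟨Finset.subset_univ _, hTcard⟩, ?_⟩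
      refine Finset.mem_pi.2 fun i hi => ?_
      have := Finset.min'_mem _ (hne i hi)
      rw [Finset.mem_filter] at this
      exact Finset.mem_filter.2 ⟨Finset.mem_univ _, this.2⟩
    · -- s = image
      ext x
      simp only [Finset.mem_image]
      constructor
      · rintro ⟨⟨i, hi⟩, -, rfl⟩
        exact (Finset.mem_filter.1 (Finset.min'_mem _ (hne i hi))).1
      · intro hx
        have hfx : f x ∈ T := Finset.mem_image.2 ⟨x, hx, rfl⟩
        refine ⟨⟨f x, hfx⟩, Finset.mem_attach _ _, ?_⟩
        have hmem := Finset.min'_mem _ (hne (f x) hfx)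
        rw [Finset.mem_filter] at hmem
        exact hinj hmem.1 hx hmem.2

private lemma fiber_sum {n m : ℕ} (f : Fin n → Fin m) :
    ∑ i, ((Finset.univ : Finset (Fin n)).filter fun v => f v = i).card = n := by
  classical
  calc ∑ i, ((Finset.univ : Finset (Fin n)).filter fun v => f v = i).card
      = ((Finset.univ : Finset (Fin n))).card :=
        (Finset.card_eq_sum_card_fiberwise (fun x _ => Finset.mem_univ (f x))).symm
    _ = n := by simp

private lemma turan_fiber {n m : ℕ} (hm : 0 < m) (i : Fin m) :
    ((Finset.univ : Finset (Fin n)).filter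
        fun (v : Fin n) => (⟨(v : ℕ) % m, Nat.mod_lt _ hm⟩ : Fin m) = i).card
      = (n + m - 1 - (i : ℕ)) / m := by
  classical
  have hfe : ∀ v : Fin n,
      ((⟨(v : ℕ) % m, Nat.mod_lt _ hm⟩ : Fin m) = i ↔ (v : ℕ) % m = (i : ℕ)) := by
    intro v; rw [Fin.ext_iff]
  have him : (i : ℕ) < m := i.2
  rw [← Finset.card_range ((n + m - 1 - (i : ℕ)) / m)]
  refine Finset.card_nbij (fun (v : Fin n) => (v : ℕ) / m) ?_ ?_ ?_
  · intro v hv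
    obtain ⟨-, hmod⟩ := Finset.mem_filter.1 hv
    rw [hfe] at hmod
    have hvn : (v : ℕ) < n := v.2
    have hdm := Nat.div_add_mod (v : ℕ) m
    rw [hmod] at hdm
    simp only [Finset.mem_coe]
    rw [Finset.mem_range, Nat.lt_iff_add_one_le, Nat.le_div_iff_mul_le hm]
    have e1 : ((v : ℕ) / m + 1) * m = m * ((v : ℕ) / m) + m := by ring
    rw [e1]
    generalize m * ((v : ℕ) / m) = X at hdm ⊢
    omega
  · intro v hv w hw hvw
    simp only [Finset.mem_coe, Finset.mem_filter] at hv hw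
    obtain ⟨-, hmodv⟩ := hv
    obtain ⟨-, hmodw⟩ := hw
    rw [hfe] at hmodv hmodw
    have hdv := Nat.div_add_mod (v : ℕ) m
    have hdw := Nat.div_add_mod (w : ℕ) m
    rw [hmodv] at hdv
    rw [hmodw] at hdw
    have : (v : ℕ) = (w : ℕ) := by
      rw [← hdv, ← hdw]
      simp only at hvw
      rw [hvw]
    exact Fin.ext this
  · intro b hb
    simp only [Finset.coe_range, Set.mem_Iio] at hb
    have hb1 : (b + 1) * m ≤ n + m - 1 - (i : ℕ) :=
      (Nat.le_div_iff_mul_le hm).1 (by omega)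
    have e1 : (b + 1) * m = m * b + m := by ring
    rw [e1] at hb1
    have hlt : (i : ℕ) + m * b < n := by
      generalize m * b = X at hb1 ⊢
      omega
    refine ⟨⟨(i : ℕ) + m * b, hlt⟩, ?_, ?_⟩
    · refine Finset.mem_coe.2 (Finset.mem_filter.2 ⟨Finset.mem_univ _, ?_⟩)
      rw [hfe]
      show ((i : ℕ) + m * b) % m = (i : ℕ)
      rw [Nat.add_mul_mod_self_left, Nat.mod_eq_of_lt him]
    · show ((i : ℕ) + m * b) / m = b
      rw [Nat.add_mul_div_left _ _ hm, Nat.div_eq_of_lt him]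
      omega

private lemma turan_balanced {n m : ℕ} (hm : 0 < m) (i j : Fin m) :
    (n + m - 1 - (i : ℕ)) / m ≤ (n + m - 1 - (j : ℕ)) / m + 1 := by
  have h1 : n + m - 1 - (i : ℕ) ≤ (n + m - 1 - (j : ℕ)) + m := by
    have := j.2
    omega
  calc (n + m - 1 - (i : ℕ)) / m ≤ ((n + m - 1 - (j : ℕ)) + m) / m :=
        Nat.div_le_div_right h1
    _ = (n + m - 1 - (j : ℕ)) / m + 1 := Nat.add_div_right _ hm

/-- For `r < k`, every complete multipartite graph on `n` vertices with at most `k-1`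
parts (given by a part-assignment `f : Fin n → Fin (k-1)`) has at most as many copies
of `K_r` as the Turán graph `T(n, k-1)`. -/
theorem stmt_16 (n r k : ℕ) (h : r < k) (f : Fin n → Fin (k - 1)) :
    cliqueCount ((⊤ : SimpleGraph (Fin (k - 1))).comap f) r ≤
      cliqueCount (turanGraph n (k - 1)) r := by
  classical
  rcases Nat.eq_zero_or_pos (k - 1) with hm0 | hmpos
  · rcases Nat.eq_zero_or_pos n with rfl | hn
    · have hsub : ∀ G G' : SimpleGraph (Fin 0), G = G' := by
        intro G G'; ext a b; exact a.elim0
      rw [hsub ((⊤ : SimpleGraph (Fin (k - 1))).comap f) (turanGraph 0 (k - 1))]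
    · exact ((Fin.cast hm0 (f ⟨0, hn⟩)).elim0)
  · set g : Fin n → Fin (k - 1) := fun v => ⟨(v : ℕ) % (k - 1), Nat.mod_lt _ hmpos⟩
      with hg
    have hTur : turanGraph n (k - 1) = (⊤ : SimpleGraph (Fin (k - 1))).comap g := by
      ext v w
      simp only [turanGraph, comap_adj, top_adj, hg, ne_eq, Fin.mk.injEq]
    rw [hTur, cliqueCount_comap_eq f r, cliqueCount_comap_eq g r]
    have hd : ∀ i j : Fin (k - 1),
        ((Finset.univ : Finset (Fin n)).filter fun v => g v = i).card ≤
          ((Finset.univ : Finset (Fin n)).filter fun v => g v = j).card + 1 := by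
      intro i j
      rw [hg, turan_fiber hmpos i, turan_fiber hmpos j]
      exact turan_balanced hmpos i j
    have hsum : (∑ i, ((Finset.univ : Finset (Fin n)).filter fun v => f v = i).card)
        = ∑ i, ((Finset.univ : Finset (Fin n)).filter fun v => g v = i).card := by
      rw [fiber_sum f, fiber_sum g]
    exact EE_le_balanced r _ hd _ _ le_rfl hsum
end

section
/- Probabilistic deletion lower bound: let F and H be graphs with f = |V(F)|, h = |V(H)| and e(F) > e(H) > 0. Then ex(n, H, F) = Ω(n^{h − e(H)(f−2)/(e(F)−e(H))}); i.e., there is a constant c' > 0 such that for all large n there exists an n-vertex F-free graph with at least c'·n^{h − e(H)(f−2)/(e(F)−e(H))} copies of H. -/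
open SimpleGraph

open Finset

section aux
variable {α γ : Type*} [Fintype α] [Fintype γ]

lemma subgraph_finite {V : Type*} [Finite V] (G : SimpleGraph V) : Finite G.Subgraph := by
  have hinj : Function.Injective (fun G' : G.Subgraph => (G'.verts, G'.Adj)) := by
    intro a b h
    simp only [Prod.mk.injEq] at h
    exact SimpleGraph.Subgraph.ext h.1 h.2
  exact Finite.of_injective _ hinj

open scoped Classical in
noncomputable def injHoms {n : ℕ} (H : SimpleGraph α) (G : SimpleGraph (Fin n)) :
    Finset (α → Fin n) :=
  univ.filter fun φ => Function.Injective φ ∧ ∀ a b, H.Adj a b → G.Adj (φ a) (φ b)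

lemma mem_injHoms {n : ℕ} {H : SimpleGraph α} {G : SimpleGraph (Fin n)} {φ : α → Fin n} :
    φ ∈ injHoms H G ↔ Function.Injective φ ∧ ∀ a b, H.Adj a b → G.Adj (φ a) (φ b) := by
  simp [injHoms]

lemma le_copyCount {n : ℕ} [Nonempty α] (H : SimpleGraph α) (G : SimpleGraph (Fin n)) :
    (injHoms H G).card ≤ (Fintype.card α) ^ (Fintype.card α) * _root_.copyCount H G := by
  classical
  have hSfin : Finite G.Subgraph := subgraph_finite G
  set 𝒮 : Set G.Subgraph := {G' : G.Subgraph | Nonempty (H ≃g G'.coe)} with h𝒮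
  let S : (α → Fin n) → G.Subgraph := fun φ =>
    { verts := Set.range φ
      Adj := fun u v => G.Adj u v ∧ ∃ a b, H.Adj a b ∧ φ a = u ∧ φ b = v
      adj_sub := fun h => h.1
      edge_vert := fun h => by obtain ⟨_, a, b, _, ha, _⟩ := h; exact ⟨a, ha⟩
      symm := ⟨fun u v h => by
        obtain ⟨hg, a, b, hab, ha, hb⟩ := h
        exact ⟨hg.symm, b, a, hab.symm, hb, ha⟩⟩ }
  -- every φ in injHoms gives a copy
  have key1 : ∀ φ ∈ injHoms H G, S φ ∈ 𝒮 := by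
    intro φ hφ
    rw [mem_injHoms] at hφ
    obtain ⟨hinj, hhom⟩ := hφ
    refine ⟨⟨Equiv.ofInjective φ hinj, ?_⟩⟩
    intro a b
    show (S φ).Adj (φ a) (φ b) ↔ H.Adj a b
    constructor
    · rintro ⟨-, a', b', hab', ha', hb'⟩
      rw [hinj ha', hinj hb'] at hab'
      exact hab'
    · intro hab
      exact ⟨hhom _ _ hab, a, b, hab, rfl, rfl⟩
  -- fiber bound
  have key3 : (injHoms H G).card ≤
      (Fintype.card α) ^ (Fintype.card α) * ((injHoms H G).image S).card := by
    refine Finset.card_le_mul_card_image _ _ ?_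
    intro b hb
    obtain ⟨φ0, hφ0, hSφ0⟩ := Finset.mem_image.1 hb
    have hφ0inj : Function.Injective φ0 := (mem_injHoms.1 hφ0).1
    have : ((injHoms H G).filter fun φ => S φ = b).card ≤
        (univ : Finset (α → α)).card := by
      refine Finset.card_le_card_of_injOn
        (fun φ => fun x => Function.invFun φ0 (φ x)) (fun _ _ => mem_univ _) ?_
      intro φ hφ φ' hφ' heq
      simp only [Finset.mem_coe, Finset.mem_filter] at hφ hφ'
      have hr : Set.range φ = Set.range φ0 := by
        have := hφ.2.trans hSφ0.symm
        exact congrArg SimpleGraph.Subgraph.verts this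
      have hr' : Set.range φ' = Set.range φ0 := by
        have := hφ'.2.trans hSφ0.symm
        exact congrArg SimpleGraph.Subgraph.verts this
      funext x
      have h1 : φ0 (Function.invFun φ0 (φ x)) = φ x :=
        Function.invFun_eq (by rw [← Set.mem_range, ← hr]; exact Set.mem_range_self x)
      have h2 : φ0 (Function.invFun φ0 (φ' x)) = φ' x :=
        Function.invFun_eq (by rw [← Set.mem_range, ← hr']; exact Set.mem_range_self x)
      have := congrFun heq x
      simp only at this
      rw [← h1, ← h2, this]
    simpa [Fintype.card_fun] using this
  refine key3.trans (Nat.mul_le_mul_left _ ?_)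
  have hsub : ↑((injHoms H G).image S) ⊆ 𝒮 := by
    intro b hb
    obtain ⟨φ, hφ, rfl⟩ := Finset.mem_image.1 (Finset.mem_coe.1 hb)
    exact key1 φ hφ
  calc ((injHoms H G).image S).card = (↑((injHoms H G).image S) : Set G.Subgraph).ncard := by
        rw [Set.ncard_coe_finset]
    _ ≤ 𝒮.ncard := Set.ncard_le_ncard hsub (Set.toFinite 𝒮)
    _ = _root_.copyCount H G := rfl

def rg (n q : ℕ) [NeZero q] (ω : Sym2 (Fin n) → Fin q) : SimpleGraph (Fin n) where
  Adj u v := u ≠ v ∧ ω s(u, v) = 0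
  symm := ⟨fun u v h => ⟨h.1.symm, by rw [Sym2.eq_swap]; exact h.2⟩⟩
  loopless := ⟨fun u h => h.1 rfl⟩

open scoped Classical in
lemma sum_injHoms (n q : ℕ) [NeZero q] (H : SimpleGraph α) :
    (∑ ω : Sym2 (Fin n) → Fin q, (injHoms H (rg n q ω)).card)
      = ((univ : Finset (α → Fin n)).filter Function.Injective).card
        * q ^ (Fintype.card (Sym2 (Fin n)) - H.edgeSet.ncard) := by
  classical
  have hedge : H.edgeSet.ncard = H.edgeFinset.card := by
    rw [Set.ncard_eq_toFinset_card', SimpleGraph.edgeFinset]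
  -- rewrite the card as a double sum and swap
  have h1 : ∀ G : SimpleGraph (Fin n), (injHoms H G).card =
      ∑ φ : α → Fin n, if (Function.Injective φ ∧ ∀ a b, H.Adj a b → G.Adj (φ a) (φ b))
        then 1 else 0 := by
    intro G
    rw [injHoms, Finset.card_filter]
  simp only [h1]
  rw [Finset.sum_comm]
  rw [Finset.card_filter, Finset.sum_mul]
  apply Finset.sum_congr rfl
  intro φ _
  by_cases hinj : Function.Injective φ
  · simp only [hinj, true_and, if_true, one_mul]
    -- inner sum is the number of ω vanishing on T
    set T : Finset (Sym2 (Fin n)) := H.edgeFinset.image (Sym2.map φ) with hT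
    have hTcard : T.card = H.edgeSet.ncard := by
      rw [hT, Finset.card_image_of_injective _ (Sym2.map.injective hinj), hedge]
    have hmem : ∀ ω : Sym2 (Fin n) → Fin q,
        (∀ a b, H.Adj a b → (rg n q ω).Adj (φ a) (φ b)) ↔ (∀ e ∈ T, ω e = 0) := by
      intro ω
      constructor
      · intro h e he
        rw [hT, Finset.mem_image] at he
        obtain ⟨e', he', rfl⟩ := he
        rw [SimpleGraph.mem_edgeFinset] at he'
        induction e' with
        | _ a b =>
          rw [SimpleGraph.mem_edgeSet] at he'
          exact (h a b he').2
      · intro h a b hab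
        refine ⟨fun hc => hab.ne (hinj hc), ?_⟩
        exact h _ (Finset.mem_image_of_mem _ (SimpleGraph.mem_edgeFinset.2
          (H.mem_edgeSet.2 hab)))
    calc (∑ ω : Sym2 (Fin n) → Fin q,
          if (∀ a b, H.Adj a b → (rg n q ω).Adj (φ a) (φ b)) then 1 else 0)
        = ((univ : Finset (Sym2 (Fin n) → Fin q)).filter fun ω => ∀ e ∈ T, ω e = 0).card := by
          rw [Finset.card_filter]
          exact Finset.sum_congr rfl fun ω _ => by simp only [hmem ω]
      _ = (Fintype.piFinset fun e : Sym2 (Fin n) =>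
            if e ∈ T then ({0} : Finset (Fin q)) else univ).card := by
          congr 1
          ext ω
          simp only [Finset.mem_filter, Finset.mem_univ, true_and, Fintype.mem_piFinset]
          constructor
          · intro h e
            by_cases he : e ∈ T
            · simp [he, h e he]
            · simp [he]
          · intro h e he
            have := h e
            simpa [he] using this
      _ = q ^ (Fintype.card (Sym2 (Fin n)) - H.edgeSet.ncard) := by
          rw [Fintype.card_piFinset]
          have : ∀ e : Sym2 (Fin n),
              ((if e ∈ T then ({0} : Finset (Fin q)) else univ)).card
                = if e ∈ T then 1 else q := by
            intro e; by_cases he : e ∈ T <;> simp [he]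
          simp only [this]
          rw [← Finset.prod_sdiff (Finset.subset_univ T)]
          rw [Finset.prod_ite_of_false (by intro e he; exact (Finset.mem_sdiff.1 he).2),
            Finset.prod_ite_of_true (fun e he => he)]
          simp [Finset.card_sdiff_of_subset (Finset.subset_univ T), hTcard, Finset.card_univ]
  · simp [hinj]

/-- The deletion step: from any `G` we obtain an `F`-free subgraph `G'` losing few copies. -/
lemma deletion {n : ℕ} (H : SimpleGraph α) (F : SimpleGraph γ)
    (hF : 0 < F.edgeSet.ncard) (G : SimpleGraph (Fin n)) :
    ∃ G' : SimpleGraph (Fin n), F.InjFree G' ∧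
      (injHoms H G).card ≤ (injHoms H G').card
        + (injHoms F G).card * (2 * (Fintype.card α) ^ 2 * n ^ (Fintype.card α - 2)) := by
  classical
  -- pick an edge of F
  have hne : F.edgeSet.Nonempty := Set.nonempty_of_ncard_ne_zero (by omega)
  obtain ⟨e0, he0⟩ := hne
  induction e0 with
  | _ a0 b0 =>
  rw [SimpleGraph.mem_edgeSet] at he0
  set D : Finset (Sym2 (Fin n)) := (injHoms F G).image (fun ψ => s(ψ a0, ψ b0)) with hD
  have hle : ∀ u v, (G.deleteEdges ↑D).Adj u v → G.Adj u v :=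
    fun u v h => (SimpleGraph.deleteEdges_adj.1 h).1
  refine ⟨G.deleteEdges ↑D, ?_, ?_⟩
  · rintro ⟨ψ, hψinj⟩
    have hmem : (ψ : γ → Fin n) ∈ injHoms F G := by
      rw [mem_injHoms]
      exact ⟨hψinj, fun a b hab => hle _ _ (ψ.map_adj hab)⟩
    have hDmem : s(ψ a0, ψ b0) ∈ D := Finset.mem_image_of_mem _ hmem
    have hadj : (G.deleteEdges ↑D).Adj (ψ a0) (ψ b0) := ψ.map_adj he0
    rw [SimpleGraph.deleteEdges_adj] at hadj
    exact hadj.2 (Finset.mem_coe.2 hDmem)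
  · -- counting the lost homomorphisms
    set h := Fintype.card α
    have hsub : injHoms H G ⊆ injHoms H (G.deleteEdges ↑D) ∪ (injHoms H G \ injHoms H (G.deleteEdges ↑D)) := by
      intro φ hφ
      by_cases h' : φ ∈ injHoms H (G.deleteEdges ↑D)
      · exact Finset.mem_union_left _ h'
      · exact Finset.mem_union_right _ (Finset.mem_sdiff.2 ⟨hφ, h'⟩)
    have hB : (injHoms H G \ injHoms H (G.deleteEdges ↑D)) ⊆
        D.biUnion (fun d => (univ : Finset α).offDiag.biUnion (fun ab =>
          univ.filter (fun φ : α → Fin n => s(φ ab.1, φ ab.2) = d))) := by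
      intro φ hφ
      rw [Finset.mem_sdiff] at hφ
      obtain ⟨hφG, hφG'⟩ := hφ
      rw [mem_injHoms] at hφG hφG'
      obtain ⟨hinj, hhom⟩ := hφG
      push_neg at hφG'
      obtain ⟨a, b, hab, hnadj⟩ := hφG' hinj
      have hGadj : G.Adj (φ a) (φ b) := hhom _ _ hab
      have hd : s(φ a, φ b) ∈ D := by
        by_contra hc
        exact hnadj ((SimpleGraph.deleteEdges_adj).2 ⟨hGadj, hc⟩)
      refine Finset.mem_biUnion.2 ⟨s(φ a, φ b), hd, ?_⟩
      refine Finset.mem_biUnion.2 ⟨(a, b), ?_, ?_⟩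
      · exact Finset.mem_offDiag.2 ⟨mem_univ _, mem_univ _, hab.ne⟩
      · simp
    have hpair : ∀ d : Sym2 (Fin n), ∀ ab : α × α, ab ∈ (univ : Finset α).offDiag →
        (univ.filter (fun φ : α → Fin n => s(φ ab.1, φ ab.2) = d)).card ≤ 2 * n ^ (h - 2) := by
      intro d ab habd
      obtain ⟨a, b⟩ := ab
      have hab : a ≠ b := (Finset.mem_offDiag.1 habd).2.2
      induction d using Sym2.ind with
      | _ u v =>
      have hsubd : (univ.filter (fun φ : α → Fin n => s(φ a, φ b) = s(u, v))) ⊆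
          (univ.filter (fun φ : α → Fin n => φ a = u ∧ φ b = v)) ∪
          (univ.filter (fun φ : α → Fin n => φ a = v ∧ φ b = u)) := by
        intro φ hφ
        rw [Finset.mem_filter] at hφ
        rw [Sym2.eq_iff] at hφ
        rcases hφ.2 with h' | h'
        · exact Finset.mem_union_left _ (Finset.mem_filter.2 ⟨mem_univ _, h'⟩)
        · exact Finset.mem_union_right _ (Finset.mem_filter.2 ⟨mem_univ _, ⟨h'.1, h'.2⟩⟩)
      have hfix : ∀ u' v' : Fin n,
          (univ.filter (fun φ : α → Fin n => φ a = u' ∧ φ b = v')).card ≤ n ^ (h - 2) := by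
        intro u' v'
        have : (univ.filter (fun φ : α → Fin n => φ a = u' ∧ φ b = v'))
            = Fintype.piFinset (fun x : α =>
                if x = a then {u'} else if x = b then {v'} else univ) := by
          ext φ
          simp only [Finset.mem_filter, Finset.mem_univ, true_and, Fintype.mem_piFinset]
          constructor
          · rintro ⟨h1, h2⟩ x
            by_cases hxa : x = a
            · subst hxa; simp [h1]
            · by_cases hxb : x = b
              · subst hxb; simp [hxa, h2]
              · simp [hxa, hxb]
          · intro hx
            constructor
            · have := hx a; simpa using this
            · have := hx b; simpa [hab.symm] using this
        rw [this, Fintype.card_piFinset]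
        have hprod : ∀ x : α, ((if x = a then ({u'} : Finset (Fin n))
            else if x = b then {v'} else univ)).card ≤ if x = a ∨ x = b then 1 else n := by
          intro x
          by_cases hxa : x = a
          · simp [hxa]
          · by_cases hxb : x = b
            · rw [if_neg hxa, if_pos hxb, if_pos (Or.inr hxb)]; simp
            · rw [if_neg hxa, if_neg hxb, if_neg (by tauto)]
              simp
        calc ∏ x : α, ((if x = a then ({u'} : Finset (Fin n))
              else if x = b then {v'} else univ)).card
            ≤ ∏ x : α, (if x = a ∨ x = b then 1 else n) :=
              Finset.prod_le_prod (fun _ _ => Nat.zero_le _) (fun x _ => hprod x)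
          _ ≤ n ^ (h - 2) := by
              rw [← Finset.prod_sdiff (Finset.subset_univ ({a, b} : Finset α))]
              have h1 : ∀ x ∈ (univ : Finset α) \ {a, b},
                  (if x = a ∨ x = b then 1 else n) = n := by
                intro x hx
                rw [Finset.mem_sdiff, Finset.mem_insert, Finset.mem_singleton] at hx
                rw [if_neg]; push_neg; exact ⟨fun h' => hx.2 (Or.inl h'), fun h' => hx.2 (Or.inr h')⟩
              have h2 : ∀ x ∈ ({a, b} : Finset α), (if x = a ∨ x = b then 1 else n) = 1 := by
                intro x hx
                rw [Finset.mem_insert, Finset.mem_singleton] at hx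
                rw [if_pos hx]
              rw [Finset.prod_congr rfl h1, Finset.prod_congr rfl h2]
              rw [Finset.prod_const, Finset.prod_const, one_pow, mul_one]
              have hcard : ((univ : Finset α) \ ({a, b} : Finset α)).card = h - 2 := by
                rw [Finset.card_sdiff_of_subset (Finset.subset_univ _), Finset.card_univ,
                  Finset.card_pair hab]
              rw [hcard]
      calc (univ.filter (fun φ : α → Fin n => s(φ a, φ b) = s(u, v))).card
          ≤ ((univ.filter (fun φ : α → Fin n => φ a = u ∧ φ b = v)) ∪
             (univ.filter (fun φ : α → Fin n => φ a = v ∧ φ b = u))).card :=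
            Finset.card_le_card hsubd
        _ ≤ (univ.filter (fun φ : α → Fin n => φ a = u ∧ φ b = v)).card +
            (univ.filter (fun φ : α → Fin n => φ a = v ∧ φ b = u)).card :=
            Finset.card_union_le _ _
        _ ≤ 2 * n ^ (h - 2) := by
            have h1 : (univ.filter (fun φ : α → Fin n => φ a = u ∧ φ b = v)).card ≤ n ^ (h - 2) :=
              hfix u v
            have h2 : (univ.filter (fun φ : α → Fin n => φ a = v ∧ φ b = u)).card ≤ n ^ (h - 2) :=
              hfix v u
            rw [two_mul]; exact Nat.add_le_add h1 h2
    calc (injHoms H G).card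
        ≤ (injHoms H (G.deleteEdges ↑D) ∪ (injHoms H G \ injHoms H (G.deleteEdges ↑D))).card :=
          Finset.card_le_card hsub
      _ ≤ (injHoms H (G.deleteEdges ↑D)).card + (injHoms H G \ injHoms H (G.deleteEdges ↑D)).card := Finset.card_union_le _ _
      _ ≤ (injHoms H (G.deleteEdges ↑D)).card + (injHoms F G).card * (2 * h ^ 2 * n ^ (h - 2)) := by
          gcongr
          calc (injHoms H G \ injHoms H (G.deleteEdges ↑D)).card
              ≤ (D.biUnion (fun d => (univ : Finset α).offDiag.biUnion (fun ab =>
                  univ.filter (fun φ : α → Fin n => s(φ ab.1, φ ab.2) = d)))).card :=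
                Finset.card_le_card hB
            _ ≤ ∑ d ∈ D, ((univ : Finset α).offDiag.biUnion (fun ab =>
                  univ.filter (fun φ : α → Fin n => s(φ ab.1, φ ab.2) = d))).card :=
                Finset.card_biUnion_le
            _ ≤ ∑ _d ∈ D, (h ^ 2 * (2 * n ^ (h - 2))) := by
                apply Finset.sum_le_sum
                intro d _
                calc ((univ : Finset α).offDiag.biUnion (fun ab =>
                      univ.filter (fun φ : α → Fin n => s(φ ab.1, φ ab.2) = d))).card
                    ≤ ∑ ab ∈ (univ : Finset α).offDiag,
                      (univ.filter (fun φ : α → Fin n => s(φ ab.1, φ ab.2) = d)).card :=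
                      Finset.card_biUnion_le
                  _ ≤ ∑ _ab ∈ (univ : Finset α).offDiag, (2 * n ^ (h - 2)) :=
                      Finset.sum_le_sum (fun ab hab => hpair d ab hab)
                  _ ≤ h ^ 2 * (2 * n ^ (h - 2)) := by
                      rw [Finset.sum_const, smul_eq_mul]
                      apply Nat.mul_le_mul_right
                      have hoff := Finset.offDiag_card (s := (univ : Finset α))
                      rw [hoff, Finset.card_univ]
                      show Fintype.card α * Fintype.card α - Fintype.card α ≤ Fintype.card α ^ 2
                      have : Fintype.card α * Fintype.card α = Fintype.card α ^ 2 := by ring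
                      omega
            _ = D.card * (h ^ 2 * (2 * n ^ (h - 2))) := by rw [Finset.sum_const, smul_eq_mul]
            _ ≤ (injHoms F G).card * (2 * h ^ 2 * n ^ (h - 2)) := by
                have := Finset.card_image_le (s := injHoms F G)
                  (f := fun ψ => s(ψ a0, ψ b0))
                rw [← hD] at this
                calc D.card * (h ^ 2 * (2 * n ^ (h - 2)))
                    ≤ (injHoms F G).card * (h ^ 2 * (2 * n ^ (h - 2))) :=
                      Nat.mul_le_mul_right _ this
                  _ = (injHoms F G).card * (2 * h ^ 2 * n ^ (h - 2)) := by ring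

open scoped Classical in
lemma card_filter_injective {α : Type*} [Fintype α] (n : ℕ) :
    ((univ : Finset (α → Fin n)).filter Function.Injective).card
      = n.descFactorial (Fintype.card α) := by
  classical
  rw [← Fintype.card_subtype]
  rw [Fintype.card_congr (Equiv.subtypeInjectiveEquivEmbedding α (Fin n))]
  rw [Fintype.card_embedding_eq, Fintype.card_fin]

lemma ncard_edge_eq {β : Type*} [Fintype β] (H : SimpleGraph β) [Fintype ↑H.edgeSet] :
    H.edgeSet.ncard = H.edgeFinset.card := by
  rw [Set.ncard_eq_toFinset_card', SimpleGraph.edgeFinset]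

lemma ncard_le_sym2 {α : Type*} [Fintype α] {n : ℕ} (H : SimpleGraph α)
    (hn : Fintype.card α ≤ n) :
    H.edgeSet.ncard ≤ Fintype.card (Sym2 (Fin n)) := by
  classical
  obtain ⟨φ⟩ : Nonempty (α ↪ Fin n) :=
    Function.Embedding.nonempty_of_card_le (by simpa using hn)
  have h1 : (H.edgeFinset.image (Sym2.map φ)).card = H.edgeFinset.card :=
    Finset.card_image_of_injective _ (Sym2.map.injective φ.injective)
  rw [ncard_edge_eq, ← h1]
  exact (Finset.card_le_card (Finset.subset_univ _)).trans_eq Finset.card_univ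

end aux

/-- Probabilistic deletion lower bound: if `e(F) > e(H) > 0`, then with `f = |V(F)|`
and `h = |V(H)|`, there is `c' > 0` such that for all large `n` there exists an
`n`-vertex `F`-free graph with at least `c'·n^{h − e(H)(f−2)/(e(F)−e(H))}` copies of `H`. -/
theorem stmt_17 {α γ : Type*} [Fintype α] [Fintype γ]
    (H : SimpleGraph α) (F : SimpleGraph γ)
    (hH : 0 < H.edgeSet.ncard) (hHF : H.edgeSet.ncard < F.edgeSet.ncard) :
    ∃ c' > (0 : ℝ), ∃ N : ℕ, ∀ n ≥ N, ∃ G : SimpleGraph (Fin n), F.InjFree G ∧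
      c' * (n : ℝ) ^ ((Fintype.card α : ℝ) -
          (H.edgeSet.ncard : ℝ) * ((Fintype.card γ : ℝ) - 2) /
            ((F.edgeSet.ncard : ℝ) - (H.edgeSet.ncard : ℝ))) ≤
        (_root_.copyCount H G : ℝ) := by
  classical
  set h := Fintype.card α with hh
  set f := Fintype.card γ with hf
  set eH := H.edgeSet.ncard with heHdef
  set eF := F.edgeSet.ncard with heFdef
  -- basic numeric facts
  have h2 : 2 ≤ h := by
    obtain ⟨e, he⟩ := Set.nonempty_of_ncard_ne_zero hH.ne'
    induction e using Sym2.ind with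
    | _ a b =>
      rw [SimpleGraph.mem_edgeSet] at he
      have : Nontrivial α := ⟨⟨a, b, he.ne⟩⟩
      rw [hh]
      exact Fintype.one_lt_card
  haveI hαne : Nonempty α := Fintype.card_pos_iff.1 (by omega)
  have f3 : 3 ≤ f := by
    have h1 : eF = F.edgeFinset.card := by rw [heFdef]; exact ncard_edge_eq F
    have h2' : F.edgeFinset.card ≤ f.choose 2 := by
      rw [hf]; exact SimpleGraph.card_edgeFinset_le_card_choose_two
    have h3 : 2 ≤ eF := by omega
    by_contra hc
    push_neg at hc
    have h4 := Nat.choose_le_choose 2 (show f ≤ 2 by omega)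
    have h5 : Nat.choose 2 2 = 1 := by decide
    omega
  set d := eF - eH with hd
  have hd1 : 1 ≤ d := by omega
  have heFd : eF = eH + d := by omega
  have eH1 : 1 ≤ eH := hH
  set K := h ^ 2 * 2 ^ (h + 2) with hK
  have hKval : K = 4 * h ^ 2 * 2 ^ h := by rw [hK, pow_add]; ring
  have hK0 : 0 < K := by positivity
  set c' : ℝ := ((2:ℝ)^h * 2 * (2*(K:ℝ))^eH * (h:ℝ)^h)⁻¹ with hc'
  have hc'pos : 0 < c' := by
    rw [hc']
    have : (0:ℝ) < h := by exact_mod_cast (by omega : 0 < h)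
    positivity
  refine ⟨c', hc'pos, 2*h + f + 3, ?_⟩
  intro n hn
  have hn1 : 1 ≤ n := by omega
  have hnh : 2*h ≤ n := by omega
  have hnf : f ≤ n := by omega
  have hnR : (0:ℝ) < n := by exact_mod_cast (by omega : 0 < n)
  set dr : ℝ := (eF:ℝ) - (eH:ℝ) with hdr
  have hdrpos : 0 < dr := by
    rw [hdr]
    have : (eH:ℝ) < eF := by exact_mod_cast hHF
    linarith
  have hdrd : dr = (d:ℝ) := by
    rw [hdr, hd]
    have : eH ≤ eF := le_of_lt hHF
    push_cast [this]
    ring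
  set a : ℝ := ((f:ℝ) - 2)/dr with ha
  have hapos : 0 < a := by
    rw [ha]
    apply div_pos _ hdrpos
    have : (3:ℝ) ≤ f := by exact_mod_cast f3
    linarith
  set x : ℝ := (n:ℝ) ^ a with hx
  have hx1 : 1 ≤ x := by
    rw [hx]
    calc (1:ℝ) = (1:ℝ) ^ a := (Real.one_rpow a).symm
      _ ≤ (n:ℝ) ^ a := Real.rpow_le_rpow zero_le_one (by exact_mod_cast hn1) hapos.le
  have hxpos : 0 < x := lt_of_lt_of_le zero_lt_one hx1
  set q : ℕ := K * ⌈x⌉₊ with hq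
  have hq0 : 0 < q := by
    rw [hq]
    exact Nat.mul_pos hK0 (Nat.ceil_pos.2 hxpos)
  haveI : NeZero q := ⟨hq0.ne'⟩
  set Qr : ℝ := (q:ℝ) with hQr
  have hQpos : (0:ℝ) < Qr := by rw [hQr]; exact_mod_cast hq0
  have hQlow : (K:ℝ) * x ≤ Qr := by
    rw [hQr, hq]
    push_cast
    exact mul_le_mul_of_nonneg_left (Nat.le_ceil x) (by positivity)
  have hQhigh : Qr ≤ 2*(K:ℝ)*x := by
    rw [hQr, hq]
    push_cast
    have h1 : (⌈x⌉₊:ℝ) ≤ x + 1 := (Nat.ceil_lt_add_one (by positivity)).le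
    have h2' : x + 1 ≤ 2*x := by linarith
    calc (K:ℝ)*(⌈x⌉₊:ℝ) ≤ (K:ℝ)*(2*x) :=
          mul_le_mul_of_nonneg_left (h1.trans h2') (by positivity)
      _ = 2*(K:ℝ)*x := by ring
  set E := Fintype.card (Sym2 (Fin n)) with hE
  have heHE : eH ≤ E := by
    rw [heHdef, hE]; exact ncard_le_sym2 H (by omega)
  have heFE : eF ≤ E := by
    rw [heFdef, hE]; exact ncard_le_sym2 F (by omega)
  set C2 : ℕ := 2 * h^2 * n^(h-2) with hC2
  set Dh : ℝ := (n.descFactorial h : ℝ) with hDh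
  have hAlow : ((n:ℝ)/2)^h ≤ Dh := by
    have h1 : (n + 1 - h)^h ≤ n.descFactorial h := Nat.pow_sub_le_descFactorial n h
    have h2' : ((n + 1 - h : ℕ):ℝ) = (n:ℝ) + 1 - h := by
      have hle : h ≤ n + 1 := by omega
      push_cast [hle]
      ring
    have h3 : (n:ℝ)/2 ≤ ((n+1-h:ℕ):ℝ) := by
      rw [h2']
      have : 2*(h:ℝ) ≤ n := by exact_mod_cast hnh
      linarith
    calc ((n:ℝ)/2)^h ≤ (((n+1-h:ℕ):ℝ))^h := by
          apply pow_le_pow_left₀ (by positivity) h3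
      _ = (((n+1-h)^h : ℕ):ℝ) := by push_cast; ring
      _ ≤ Dh := by rw [hDh]; exact_mod_cast h1
  have hDhpos : 0 < Dh := lt_of_lt_of_le (by positivity) hAlow
  -- expectation identities
  have hSH := sum_injHoms n q H
  have hSF := sum_injHoms n q F
  rw [card_filter_injective] at hSH hSF
  rw [← hh] at hSH
  rw [← hf] at hSF
  rw [← heHdef] at hSH
  rw [← heFdef] at hSF
  rw [← hE] at hSH hSF
  have hSHr : (∑ ω : Sym2 (Fin n) → Fin q, ((injHoms H (rg n q ω)).card : ℝ))
      = Dh * Qr^E / Qr^eH := by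
    rw [eq_div_iff (by positivity)]
    have hnat : (∑ ω : Sym2 (Fin n) → Fin q, (injHoms H (rg n q ω)).card) * q^eH
        = n.descFactorial h * q^E := by
      rw [hSH, mul_assoc, ← pow_add, Nat.sub_add_cancel heHE]
    have := congrArg (fun m : ℕ => (m : ℝ)) hnat
    push_cast at this
    rw [hDh, hQr]
    push_cast
    convert this using 2
  have hSFr : (∑ ω : Sym2 (Fin n) → Fin q, ((injHoms F (rg n q ω)).card : ℝ))
      ≤ (n:ℝ)^f * Qr^E / Qr^eF := by
    rw [le_div_iff₀ (by positivity)]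
    have hnat : (∑ ω : Sym2 (Fin n) → Fin q, (injHoms F (rg n q ω)).card) * q^eF
        = n.descFactorial f * q^E := by
      rw [hSF, mul_assoc, ← pow_add, Nat.sub_add_cancel heFE]
    have hnat2 : (∑ ω : Sym2 (Fin n) → Fin q, (injHoms F (rg n q ω)).card) * q^eF
        ≤ n^f * q^E := by
      rw [hnat]
      exact Nat.mul_le_mul_right _ (Nat.descFactorial_le_pow n f)
    have := (Nat.cast_le (α := ℝ)).2 hnat2
    push_cast at this
    rw [hQr]
    push_cast
    convert this using 2
  -- the key inequality
  have hxd : x^d = (n:ℝ)^((f:ℝ)-2) := by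
    rw [hx, ← Real.rpow_natCast ((n:ℝ)^a) d, ← Real.rpow_mul hnR.le]
    congr 1
    rw [ha, ← hdrd]
    field_simp
  have hnf2 : (n:ℝ)^(h:ℕ) * (n:ℝ)^((f:ℝ)-2) = (n:ℝ)^(h+f-2 : ℕ) := by
    rw [← Real.rpow_natCast (n:ℝ) h, ← Real.rpow_add hnR, ← Real.rpow_natCast (n:ℝ) (h+f-2)]
    congr 1
    have : (2:ℕ) ≤ h + f := by omega
    push_cast [this]
    ring
  have hnf3 : ((n:ℝ)^(h-2:ℕ)) * (n:ℝ)^f = (n:ℝ)^(h+f-2 : ℕ) := by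
    rw [← pow_add]
    congr 1
    omega
  have hkey : 2*(C2:ℝ)*(n:ℝ)^f ≤ Dh * Qr^d := by
    have hQd : (K:ℝ)^d * (n:ℝ)^((f:ℝ)-2) ≤ Qr^d := by
      rw [← hxd]
      calc (K:ℝ)^d * x^d = ((K:ℝ)*x)^d := (mul_pow _ _ _).symm
        _ ≤ Qr^d := pow_le_pow_left₀ (by positivity) hQlow d
    have hKd : (4*(h:ℝ)^2*2^h) ≤ (K:ℝ)^d := by
      have h1 : (K:ℝ) ≤ (K:ℝ)^d := le_self_pow₀ (by exact_mod_cast hK0) (by omega)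
      have h2' : (4*(h:ℝ)^2*2^h) = (K:ℝ) := by
        rw [hKval]; push_cast; ring
      linarith
    calc 2*(C2:ℝ)*(n:ℝ)^f = 4*(h:ℝ)^2 * ((n:ℝ)^(h-2:ℕ) * (n:ℝ)^f) := by
          rw [hC2]; push_cast; ring
      _ = 4*(h:ℝ)^2 * (n:ℝ)^(h+f-2 : ℕ) := by rw [hnf3]
      _ ≤ ((n:ℝ)/2)^h * ((K:ℝ)^d * (n:ℝ)^((f:ℝ)-2)) := by
          have heq : ((n:ℝ)/2)^h * ((K:ℝ)^d * (n:ℝ)^((f:ℝ)-2))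
              = ((K:ℝ)^d/2^h) * ((n:ℝ)^(h:ℕ) * (n:ℝ)^((f:ℝ)-2)) := by
            rw [div_pow]; ring
          rw [heq, hnf2]
          apply mul_le_mul_of_nonneg_right _ (by positivity)
          rw [le_div_iff₀ (by positivity)]
          exact hKd
      _ ≤ Dh * Qr^d := by
          apply mul_le_mul hAlow hQd (by positivity) hDhpos.le
  have hdiv : (C2:ℝ)*(n:ℝ)^f / Qr^eF ≤ Dh / (2*Qr^eH) := by
    rw [div_le_div_iff₀ (by positivity) (by positivity)]
    calc (C2:ℝ)*(n:ℝ)^f * (2*Qr^eH) = (2*(C2:ℝ)*(n:ℝ)^f) * Qr^eH := by ring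
      _ ≤ (Dh * Qr^d) * Qr^eH := mul_le_mul_of_nonneg_right hkey (by positivity)
      _ = Dh * Qr^eF := by
          rw [mul_assoc, ← pow_add]
          congr 2
          omega
  -- pigeonhole
  haveI : Nonempty (Fin q) := ⟨⟨0, hq0⟩⟩
  set t : ℝ := Dh / (2 * Qr^eH) with ht
  have hcardΩ : ((Fintype.card (Sym2 (Fin n) → Fin q) : ℕ) : ℝ) = Qr^E := by
    rw [Fintype.card_fun, Fintype.card_fin, hE, hQr]
    push_cast
    ring
  have key : ∑ _ω : Sym2 (Fin n) → Fin q, t ≤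
      ∑ ω : Sym2 (Fin n) → Fin q,
        (((injHoms H (rg n q ω)).card : ℝ) - (C2:ℝ) * ((injHoms F (rg n q ω)).card : ℝ)) := by
    rw [Finset.sum_const, Finset.card_univ, nsmul_eq_mul, hcardΩ]
    rw [Finset.sum_sub_distrib, ← Finset.mul_sum]
    have e3 : (C2:ℝ) * (∑ ω : Sym2 (Fin n) → Fin q, ((injHoms F (rg n q ω)).card : ℝ))
        ≤ (C2:ℝ) * ((n:ℝ)^f * Qr^E / Qr^eF) :=
      mul_le_mul_of_nonneg_left hSFr (by positivity)
    have e4 : (C2:ℝ) * ((n:ℝ)^f * Qr^E / Qr^eF) ≤ Qr^E * t := by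
      rw [show (C2:ℝ)*((n:ℝ)^f*Qr^E/Qr^eF) = ((C2:ℝ)*(n:ℝ)^f/Qr^eF)*Qr^E by ring,
        show Qr^E*t = t*Qr^E by ring, ht]
      exact mul_le_mul_of_nonneg_right hdiv (by positivity)
    have e5 : Dh*Qr^E/Qr^eH - Qr^E * t = Qr^E * t := by
      rw [ht]
      field_simp
      ring
    rw [hSHr]
    linarith
  obtain ⟨ω, -, hω⟩ := Finset.exists_le_of_sum_le Finset.univ_nonempty key
  -- deletion
  obtain ⟨G', hfree, hdel⟩ := deletion H F (by omega) (rg n q ω)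
  rw [← hh] at hdel
  rw [← hC2] at hdel
  have hG'count : t ≤ ((injHoms H G').card : ℝ) := by
    have hc := (Nat.cast_le (α := ℝ)).2 hdel
    push_cast at hc
    linarith
  have hcc := le_copyCount H G'
  rw [← hh] at hcc
  have hccr : t/(h:ℝ)^h ≤ (_root_.copyCount H G' : ℝ) := by
    rw [div_le_iff₀ (by positivity)]
    calc t ≤ ((injHoms H G').card : ℝ) := hG'count
      _ ≤ ((h^h * _root_.copyCount H G' : ℕ) : ℝ) := by exact_mod_cast hcc
      _ = (_root_.copyCount H G' : ℝ) * (h:ℝ)^h := by push_cast; ring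
  refine ⟨G', hfree, le_trans ?_ hccr⟩
  -- final arithmetic
  have hexpo : (n:ℝ) ^ ((h:ℝ) - (eH:ℝ)*((f:ℝ)-2)/dr) = (n:ℝ)^(h:ℕ) / x^eH := by
    have hxeH : x^eH = (n:ℝ)^(a*(eH:ℝ)) := by
      rw [hx, ← Real.rpow_natCast ((n:ℝ)^a) eH, ← Real.rpow_mul hnR.le]
    rw [hxeH, ← Real.rpow_natCast (n:ℝ) h, ← Real.rpow_sub hnR]
    congr 1
    rw [ha]
    ring
  rw [hexpo]
  have ht2 : ((n:ℝ)/2)^h / (2*((2*(K:ℝ))*x)^eH) ≤ t := by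
    rw [ht]
    apply div_le_div₀ hDhpos.le hAlow (by positivity)
    have : Qr^eH ≤ ((2*(K:ℝ))*x)^eH := by
      apply pow_le_pow_left₀ hQpos.le
      calc Qr ≤ 2*(K:ℝ)*x := hQhigh
        _ = (2*(K:ℝ))*x := by ring
    linarith
  calc c' * ((n:ℝ)^(h:ℕ) / x^eH)
      = (((n:ℝ)/2)^h / (2*((2*(K:ℝ))*x)^eH))/(h:ℝ)^h := by
        rw [hc']
        have hhpos : (0:ℝ) < (h:ℝ) := by exact_mod_cast (by omega : 0 < h)
        field_simp
        have h2h : ((1:ℝ)/2)^h * 2^h = 1 := by rw [← mul_pow]; norm_num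
        linear_combination (-((n:ℝ)^h * (K:ℝ)^eH * x^eH * 2^eH)) * h2h
    _ ≤ t/(h:ℝ)^h := by
        have hhpos : (0:ℝ) < (h:ℝ)^h := by
          have : (0:ℝ) < (h:ℝ) := by exact_mod_cast (by omega : 0 < h)
          positivity
        exact (div_le_div_iff_of_pos_right hhpos).2 ht2
end
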